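/- arXiv:1711.01818 — 2 statements merged into one kernel-verified Lean document; each statement's English description precedes it below -/
import Mathlib

section
/- Let (M + U)c = M c⁰ hold, where M is diagonal with positive entries, U has nonpositive off-diagonal entries, nonnegative diagonal entries, and zero row sums (Σ_j U_ij = 0 for each i). If 0 ≤ c⁰_i ≤ 1 for all i, then 0 ≤ c_i ≤ 1 for all i. -/
lemma upwind_min_aux (n : ℕ)
    (M U : Matrix (Fin n) (Fin n) ℝ)
    (hMdiag : ∀ i j, i ≠ j → M i j = 0)
    (hMpos : ∀ i, 0 < M i i)
    (hUoff : ∀ i j, i ≠ j → U i j ≤ 0)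
    (hUrow : ∀ i, ∑ j, U i j = 0)
    (c c0 : Fin n → ℝ)
    (heq : (M + U).mulVec c = M.mulVec c0)
    (k : Fin n) (hk : ∀ j, c k ≤ c j) : c0 k ≤ c k := by
  have h := congrFun heq k
  simp only [Matrix.mulVec, dotProduct, Matrix.add_apply, add_mul, Finset.sum_add_distrib] at h
  have hM : ∀ (v : Fin n → ℝ), ∑ j, M k j * v j = M k k * v k := by
    intro v
    rw [Finset.sum_eq_single k]
    · intro j _ hj; rw [hMdiag k j (Ne.symm hj), zero_mul]
    · intro hj; exact absurd (Finset.mem_univ k) hj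
  rw [hM c, hM c0] at h
  have hS : ∑ j, U k j * c j ≤ 0 := by
    have : ∑ j, U k j * c j = ∑ j, U k j * (c j - c k) := by
      rw [← sub_eq_zero]
      rw [← Finset.sum_sub_distrib]
      have : ∀ j, U k j * c j - U k j * (c j - c k) = U k j * c k := by
        intro j; ring
      simp only [this, ← Finset.sum_mul, hUrow k, zero_mul]
    rw [this]
    apply Finset.sum_nonpos
    intro j _
    rcases eq_or_ne j k with rfl | hj
    · simp
    · exact mul_nonpos_of_nonpos_of_nonneg (hUoff k j (Ne.symm hj)) (by linarith [hk j])
  nlinarith [hMpos k]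

/-- Discrete maximum principle for the implicit upwind scheme with zero row sums. -/
theorem implicit_upwind_maximum_principle (n : ℕ)
    (M U : Matrix (Fin n) (Fin n) ℝ)
    (hMdiag : ∀ i j, i ≠ j → M i j = 0)
    (hMpos : ∀ i, 0 < M i i)
    (hUoff : ∀ i j, i ≠ j → U i j ≤ 0)
    (hUdiag : ∀ i, 0 ≤ U i i)
    (hUrow : ∀ i, ∑ j, U i j = 0)
    (c c0 : Fin n → ℝ)
    (hc0 : ∀ i, 0 ≤ c0 i ∧ c0 i ≤ 1)
    (heq : (M + U).mulVec c = M.mulVec c0) :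
    ∀ i, 0 ≤ c i ∧ c i ≤ 1 := by
  intro i
  obtain ⟨kmin, -, hkmin⟩ := Finset.exists_min_image Finset.univ c ⟨i, Finset.mem_univ i⟩
  obtain ⟨kmax, -, hkmax⟩ := Finset.exists_max_image Finset.univ c ⟨i, Finset.mem_univ i⟩
  have hmin : c0 kmin ≤ c kmin :=
    upwind_min_aux n M U hMdiag hMpos hUoff hUrow c c0 heq kmin
      (fun j => hkmin j (Finset.mem_univ j))
  have heq' : (M + U).mulVec (-c) = M.mulVec (-c0) := by
    rw [Matrix.mulVec_neg, Matrix.mulVec_neg, heq]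
  have hmax : (-c0) kmax ≤ (-c) kmax :=
    upwind_min_aux n M U hMdiag hMpos hUoff hUrow (-c) (-c0) heq' kmax
      (fun j => neg_le_neg (hkmax j (Finset.mem_univ j)))
  simp only [Pi.neg_apply, neg_le_neg_iff] at hmax
  have h0 := hc0 kmin
  have h1 := hc0 kmax
  constructor
  · linarith [hkmin i (Finset.mem_univ i)]
  · linarith [hkmax i (Finset.mem_univ i)]
end

section
/- Let a, b : V × V → ℝ with a a symmetric positive definite bilinear form on a finite-dimensional space V and b : V × Q → ℝ a bilinear form on finite-dimensional spaces satisfying the inf-sup condition: there is β > 0 such that for every q ∈ Q, sup_{v ≠ 0} b(v,q)/‖v‖ ≥ β‖q‖. Then the saddle-point problem a(u,v) + b(v,p) = G(v) for all v, b(u,q) = F(q) for all q, has a unique solution (u,p) ∈ V × Q for every pair of linear functionals G, F. -/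
/-!
The saddle-point operator `(u, p) ↦ (a u + b(·, p), b u)` maps `V × Q` into `V* × Q*`, a space of
the same finite dimension, so existence and uniqueness both follow from injectivity. If `(u, p)`
lies in its kernel, testing the first equation with `u` and using `b u p = 0` gives `a u u = 0`,
hence `u = 0` by coercivity; the first equation then says `b(·, p) = 0`, hence `p = 0` by the
inf-sup condition.
-/

open Module

section SaddlePoint

variable {R V Q : Type*} [CommRing R] [AddCommGroup V] [Module R V] [AddCommGroup Q] [Module R Q]

def saddlePointOp (a : V →ₗ[R] V →ₗ[R] R) (b : V →ₗ[R] Q →ₗ[R] R) :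
    V × Q →ₗ[R] Dual R V × Dual R Q :=
  (a.comp (LinearMap.fst R V Q) + b.flip.comp (LinearMap.snd R V Q)).prod
    (b.comp (LinearMap.fst R V Q))

@[simp]
theorem saddlePointOp_apply (a : V →ₗ[R] V →ₗ[R] R) (b : V →ₗ[R] Q →ₗ[R] R) (w : V × Q) :
    saddlePointOp a b w = (a w.1 + b.flip w.2, b w.1) :=
  rfl

theorem saddlePointOp_apply_eq_iff (a : V →ₗ[R] V →ₗ[R] R) (b : V →ₗ[R] Q →ₗ[R] R)
    (G : Dual R V) (F : Dual R Q) (w : V × Q) :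
    saddlePointOp a b w = (G, F) ↔ (∀ v, a w.1 v + b v w.2 = G v) ∧ ∀ q, b w.1 q = F q := by
  simp only [saddlePointOp_apply, Prod.mk.injEq, LinearMap.ext_iff, LinearMap.add_apply,
    LinearMap.flip_apply]

end SaddlePoint

theorem finrank_prod_eq_finrank_dual_prod {K V Q : Type*} [Field K] [AddCommGroup V] [Module K V]
    [AddCommGroup Q] [Module K Q] [FiniteDimensional K V] [FiniteDimensional K Q] :
    finrank K (V × Q) = finrank K (Dual K V × Dual K Q) := by
  simp only [finrank_prod, Subspace.dual_finrank_eq]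

section Normed

variable {V Q : Type*} [NormedAddCommGroup V] [NormedAddCommGroup Q]

theorem eq_zero_of_coercive_of_apply_self_eq_zero [Module ℝ V] {a : V →ₗ[ℝ] V →ₗ[ℝ] ℝ}
    {α : ℝ} (hα : 0 < α) (hcoer : ∀ v, α * ‖v‖ ^ 2 ≤ a v v) {u : V} (hu : a u u = 0) :
    u = 0 := by
  have : α * ‖u‖ ^ 2 ≤ 0 := hu ▸ hcoer u
  have : ‖u‖ ^ 2 ≤ 0 := nonpos_of_mul_nonpos_right this hα
  exact norm_eq_zero.mp (pow_eq_zero_iff two_ne_zero |>.mp (le_antisymm this (sq_nonneg _)))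

theorem eq_zero_of_infSup_of_forall_apply_eq_zero [Module ℝ V] [Module ℝ Q]
    {b : V →ₗ[ℝ] Q →ₗ[ℝ] ℝ} {β : ℝ} (hβ : 0 < β)
    (hinfsup : ∀ q : Q, ∃ v : V, v ≠ 0 ∧ β * ‖v‖ * ‖q‖ ≤ b v q) {p : Q} (hp : ∀ v, b v p = 0) :
    p = 0 := by
  obtain ⟨v, hv, hle⟩ := hinfsup p
  rw [hp v] at hle
  have hβv : 0 < β * ‖v‖ := mul_pos hβ (norm_pos_iff.mpr hv)
  exact norm_le_zero_iff.mp (nonpos_of_mul_nonpos_right hle hβv)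

theorem saddlePointOp_injective [Module ℝ V] [Module ℝ Q]
    {a : V →ₗ[ℝ] V →ₗ[ℝ] ℝ} {b : V →ₗ[ℝ] Q →ₗ[ℝ] ℝ}
    (hacoer : ∃ α : ℝ, 0 < α ∧ ∀ v, α * ‖v‖ ^ 2 ≤ a v v)
    (hinfsup : ∃ β : ℝ, 0 < β ∧ ∀ q : Q, ∃ v : V, v ≠ 0 ∧ β * ‖v‖ * ‖q‖ ≤ b v q) :
    Function.Injective (saddlePointOp a b) := by
  obtain ⟨α, hα, hcoer⟩ := hacoer
  obtain ⟨β, hβ, hsup⟩ := hinfsup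
  rw [← LinearMap.ker_eq_bot, LinearMap.ker_eq_bot']
  rintro ⟨u, p⟩ hup
  obtain ⟨hfirst, hsecond⟩ := (saddlePointOp_apply_eq_iff a b 0 0 (u, p)).mp hup
  have hu : u = 0 := by
    refine eq_zero_of_coercive_of_apply_self_eq_zero hα hcoer ?_
    simpa [hsecond p] using hfirst u
  have hp : p = 0 :=
    eq_zero_of_infSup_of_forall_apply_eq_zero hβ hsup fun v => by simpa [hu] using hfirst v
  simp [hu, hp]

end Normed

theorem brezzi_wellposed_general
    {V Q : Type*}
    [NormedAddCommGroup V] [NormedSpace ℝ V] [FiniteDimensional ℝ V]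
    [NormedAddCommGroup Q] [NormedSpace ℝ Q] [FiniteDimensional ℝ Q]
    (a : V →ₗ[ℝ] V →ₗ[ℝ] ℝ) (b : V →ₗ[ℝ] Q →ₗ[ℝ] ℝ)
    (hacoer : ∃ α : ℝ, 0 < α ∧ ∀ v, α * ‖v‖ ^ 2 ≤ a v v)
    (hinfsup : ∃ β : ℝ, 0 < β ∧ ∀ q : Q, ∃ v : V, v ≠ 0 ∧ β * ‖v‖ * ‖q‖ ≤ b v q)
    (G : V →ₗ[ℝ] ℝ) (F : Q →ₗ[ℝ] ℝ) :
    ∃! up : V × Q, (∀ v, a up.1 v + b v up.2 = G v) ∧ (∀ q, b up.1 q = F q) := by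
  have hinj := saddlePointOp_injective hacoer hinfsup
  have hbij : Function.Bijective (saddlePointOp a b) :=
    ⟨hinj, (LinearMap.injective_iff_surjective_of_finrank_eq_finrank
      finrank_prod_eq_finrank_dual_prod).mp hinj⟩
  exact (existsUnique_congr (saddlePointOp_apply_eq_iff a b G F)).mp (hbij.existsUnique (G, F))

/-- Finite-dimensional Brezzi theory: the saddle-point problem has a unique
solution when a is symmetric coercive and b satisfies the inf-sup condition. -/
theorem brezzi_wellposed
    {V Q : Type*}
    [NormedAddCommGroup V] [NormedSpace ℝ V] [FiniteDimensional ℝ V]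
    [NormedAddCommGroup Q] [NormedSpace ℝ Q] [FiniteDimensional ℝ Q]
    (a : V →ₗ[ℝ] V →ₗ[ℝ] ℝ) (b : V →ₗ[ℝ] Q →ₗ[ℝ] ℝ)
    (hasymm : ∀ u v, a u v = a v u)
    (hacoer : ∃ α : ℝ, 0 < α ∧ ∀ v, α * ‖v‖ ^ 2 ≤ a v v)
    (hinfsup : ∃ β : ℝ, 0 < β ∧ ∀ q : Q, ∃ v : V, v ≠ 0 ∧ β * ‖v‖ * ‖q‖ ≤ b v q)
    (G : V →ₗ[ℝ] ℝ) (F : Q →ₗ[ℝ] ℝ) :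
    ∃! up : V × Q, (∀ v, a up.1 v + b v up.2 = G v) ∧ (∀ q, b up.1 q = F q) :=
  brezzi_wellposed_general a b hacoer hinfsup G F
end
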